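/- arXiv:1803.09910 — 4 statements merged into one kernel-verified Lean document; each statement's English description precedes it below -/
import Mathlib

section
/- For every v > 0 and b ∈ ℝ, the Gaussian integral identity ∫_ℝ e^{−bz − b²v/2} · (|z|/√(2πv³)) · e^{−z²/(2v)} dz = √(2/(πv)) · e^{−b²v/2} + b·(2Φ(b√v) − 1) holds. Consequently, for 0 < u < t, multiplying the left-hand side with v = t − u by e^{−b²u/2}/√(2πu) yields ψ_t(u) = (e^{−b²u/2}/(π√(u(t−u)))) · [e^{−b²(t−u)/2} + (b/2)√(2π(t−u))·(2Φ(b√(t−u)) − 1)]. -/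
/-!
Completing the square, `e^{-bz - b²v/2} e^{-z²/(2v)} = e^{-(z + bv)²/(2v)}`, turns the integrand
into `|z|` against a Gaussian centred at `-c = -bv`. Writing `z = (z + c) - c`, the function
`z e^{-(z+c)²/(2v)}` has the primitive `-v e^{-(z+c)²/(2v)} - c √(2πv) Φ((z+c)/√v)`, which gives the
integral over `z > 0`; the integral over `z < 0` is the same with `-c` in place of `c`, and
`Φ(-x) = 1 - Φ(x)` combines the two `Φ` terms into `2Φ(b√v) - 1`. The formula for `ψ_t(u)` is then
algebra with square roots.
-/

open MeasureTheory

/-- The standard normal cumulative distribution function `Φ`. -/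
noncomputable def Phi (y : ℝ) : ℝ :=
  ∫ z in Set.Iic y, Real.exp (-z ^ 2 / 2) / Real.sqrt (2 * Real.pi)

open Real Set Filter Topology

noncomputable def stdGaussianDensity (z : ℝ) : ℝ :=
  exp (-z ^ 2 / 2) / √(2 * π)

lemma Phi_eq_integral_Iic (y : ℝ) : Phi y = ∫ z in Iic y, stdGaussianDensity z := rfl

lemma continuous_stdGaussianDensity : Continuous stdGaussianDensity := by
  unfold stdGaussianDensity
  fun_prop

lemma stdGaussianDensity_eq_exp_neg_mul_sq (z : ℝ) :
    stdGaussianDensity z = exp (-(1 / 2) * z ^ 2) * (√(2 * π))⁻¹ := by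
  rw [stdGaussianDensity, div_eq_mul_inv]
  ring_nf

lemma integrable_stdGaussianDensity : Integrable stdGaussianDensity := by
  simp_rw [funext stdGaussianDensity_eq_exp_neg_mul_sq]
  exact (integrable_exp_neg_mul_sq (by norm_num)).mul_const _

lemma integral_stdGaussianDensity : ∫ z, stdGaussianDensity z = 1 := by
  simp_rw [stdGaussianDensity_eq_exp_neg_mul_sq]
  rw [integral_mul_const, integral_gaussian, show π / (1 / 2) = 2 * π by ring]
  exact mul_inv_cancel₀ (sqrt_ne_zero'.mpr (by positivity))

lemma Phi_add_integral_Ioi (x : ℝ) : Phi x + ∫ z in Ioi x, stdGaussianDensity z = 1 := by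
  rw [Phi_eq_integral_Iic, ← compl_Iic,
    integral_add_compl measurableSet_Iic integrable_stdGaussianDensity, integral_stdGaussianDensity]

lemma stdGaussianDensity_neg (z : ℝ) : stdGaussianDensity (-z) = stdGaussianDensity z := by
  simp [stdGaussianDensity]

lemma Phi_neg (x : ℝ) : Phi (-x) = 1 - Phi x := by
  have h_symm : Phi (-x) = ∫ z in Ioi x, stdGaussianDensity z := by
    rw [Phi_eq_integral_Iic]
    simpa only [stdGaussianDensity_neg, neg_neg] using integral_comp_neg_Iic (-x) stdGaussianDensity
  linarith [Phi_add_integral_Ioi x]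

lemma Phi_eq_Phi_zero_add (y : ℝ) : Phi y = Phi 0 + ∫ z in (0 : ℝ)..y, stdGaussianDensity z := by
  have h := intervalIntegral.integral_Iic_sub_Iic integrable_stdGaussianDensity.integrableOn
    integrable_stdGaussianDensity.integrableOn (a := 0) (b := y)
  rw [Phi_eq_integral_Iic, Phi_eq_integral_Iic]
  linarith

lemma hasDerivAt_Phi (y : ℝ) : HasDerivAt Phi (stdGaussianDensity y) y := by
  rw [show Phi = fun y ↦ Phi 0 + ∫ z in (0 : ℝ)..y, stdGaussianDensity z from
    funext Phi_eq_Phi_zero_add]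
  exact (intervalIntegral.integral_hasDerivAt_right
    integrable_stdGaussianDensity.intervalIntegrable
    (continuous_stdGaussianDensity.stronglyMeasurableAtFilter _ _)
    continuous_stdGaussianDensity.continuousAt).const_add _

lemma tendsto_Phi_atTop : Tendsto Phi atTop (𝓝 1) := by
  have h := (intervalIntegral_tendsto_integral_Ioi 0
    integrable_stdGaussianDensity.integrableOn tendsto_id).const_add (Phi 0)
  rw [Phi_add_integral_Ioi] at h
  exact h.congr fun y ↦ (Phi_eq_Phi_zero_add y).symm

section ShiftedGaussian

variable {v : ℝ} (hv : 0 < v) (c : ℝ)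
include hv

lemma integrable_mul_exp_neg_sq_div :
    Integrable fun z : ℝ ↦ z * exp (-(z + c) ^ 2 / (2 * v)) := by
  have hb : 0 < 1 / (2 * v) := by positivity
  have h_shift := (integrable_mul_exp_neg_mul_sq hb).comp_add_right c
  refine (h_shift.sub ((integrable_exp_neg_mul_sq hb).comp_add_right c |>.const_mul c)).congr
    (ae_of_all _ fun z ↦ ?_)
  simp only [Pi.sub_apply]
  rw [show -(1 / (2 * v)) * (z + c) ^ 2 = -(z + c) ^ 2 / (2 * v) by ring]
  ring

lemma integrable_abs_mul_exp_neg_sq_div :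
    Integrable fun z : ℝ ↦ |z| * exp (-(z + c) ^ 2 / (2 * v)) :=
  (integrable_mul_exp_neg_sq_div hv c).abs.congr
    (ae_of_all _ fun z ↦ by simp only [abs_mul, abs_of_pos (exp_pos _)])

lemma hasDerivAt_primitive_mul_exp_neg_sq_div (x : ℝ) :
    HasDerivAt (fun z ↦ -v * exp (-(z + c) ^ 2 / (2 * v)) - c * √(2 * π * v) * Phi ((z + c) / √v))
      (x * exp (-(x + c) ^ 2 / (2 * v))) x := by
  have h_lin : HasDerivAt (fun z : ℝ ↦ z + c) 1 x := (hasDerivAt_id x).add_const c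
  have h_exponent : HasDerivAt (fun z ↦ -(z + c) ^ 2 / (2 * v)) (-(x + c) / v) x := by
    refine ((h_lin.fun_pow 2).fun_neg.div_const (2 * v)).congr_deriv ?_
    field_simp
    ring
  have h_exp := h_exponent.exp.const_mul (-v)
  have h_Phi := ((hasDerivAt_Phi _).comp x (h_lin.div_const √v)).const_mul (c * √(2 * π * v))
  refine (h_exp.sub h_Phi).congr_deriv ?_
  rw [stdGaussianDensity, div_pow, sq_sqrt hv.le, sqrt_mul (by positivity),
    show -((x + c) ^ 2 / v) / 2 = -(x + c) ^ 2 / (2 * v) by ring]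
  field_simp
  ring

lemma integral_Ioi_mul_exp_neg_sq_div :
    ∫ z in Ioi (0 : ℝ), z * exp (-(z + c) ^ 2 / (2 * v)) =
      v * exp (-c ^ 2 / (2 * v)) + c * √(2 * π * v) * (Phi (c / √v) - 1) := by
  have h_lim : Tendsto (fun z ↦ -v * exp (-(z + c) ^ 2 / (2 * v)) -
      c * √(2 * π * v) * Phi ((z + c) / √v)) atTop (𝓝 (-v * 0 - c * √(2 * π * v) * 1)) := by
    have h_shift : Tendsto (fun z : ℝ ↦ z + c) atTop atTop :=
      tendsto_atTop_add_const_right _ c tendsto_id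
    have h_exponent : Tendsto (fun z : ℝ ↦ -(z + c) ^ 2 / (2 * v)) atTop atBot :=
      (tendsto_neg_atTop_atBot.comp ((tendsto_pow_atTop two_ne_zero).comp h_shift)).atBot_div_const
        (by positivity)
    exact ((tendsto_exp_atBot.comp h_exponent).const_mul _).sub
      ((tendsto_Phi_atTop.comp (h_shift.atTop_div_const (sqrt_pos.mpr hv))).const_mul _)
  rw [integral_Ioi_of_hasDerivAt_of_tendsto'
    (fun x _ ↦ hasDerivAt_primitive_mul_exp_neg_sq_div hv c x)
    (integrable_mul_exp_neg_sq_div hv c).integrableOn h_lim]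
  simp only [zero_add]
  ring

lemma integral_abs_mul_exp_neg_sq_div :
    ∫ z, |z| * exp (-(z + c) ^ 2 / (2 * v)) =
      2 * v * exp (-c ^ 2 / (2 * v)) + c * √(2 * π * v) * (2 * Phi (c / √v) - 1) := by
  have h_Ioi (d : ℝ) : ∫ z in Ioi (0 : ℝ), |z| * exp (-(z + d) ^ 2 / (2 * v)) =
      v * exp (-d ^ 2 / (2 * v)) + d * √(2 * π * v) * (Phi (d / √v) - 1) := by
    rw [← integral_Ioi_mul_exp_neg_sq_div hv d]
    exact setIntegral_congr_fun measurableSet_Ioi fun z hz ↦ by rw [abs_of_pos hz]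
  have h_Iic : ∫ z in Iic (0 : ℝ), |z| * exp (-(z + c) ^ 2 / (2 * v)) =
      ∫ z in Ioi (0 : ℝ), |z| * exp (-(z + -c) ^ 2 / (2 * v)) := by
    rw [← neg_zero, ← integral_comp_neg_Iic, neg_zero]
    refine setIntegral_congr_fun measurableSet_Iic fun z _ ↦ ?_
    rw [abs_neg, show -z + -c = -(z + c) by ring, neg_sq]
  rw [← integral_add_compl measurableSet_Iic (integrable_abs_mul_exp_neg_sq_div hv c), compl_Iic,
    h_Iic, h_Ioi, h_Ioi, neg_div √v c, Phi_neg, neg_sq]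
  ring

end ShiftedGaussian

lemma sqrt_two_pi_mul_cube {v : ℝ} (hv : 0 < v) : √(2 * π * v ^ 3) = v * √(2 * π * v) := by
  rw [show 2 * π * v ^ 3 = v ^ 2 * (2 * π * v) by ring, sqrt_mul (by positivity), sqrt_sq hv.le]

lemma sqrt_two_div_pi_mul {v : ℝ} (hv : 0 < v) : √(2 / (π * v)) = 2 / √(2 * π * v) := by
  rw [show 2 / (π * v) = 2 ^ 2 / (2 * π * v) by field_simp, sqrt_div' _ (by positivity),
    sqrt_sq zero_le_two]

lemma sqrt_two_pi_mul_mul_sqrt_two_pi_mul {u v : ℝ} (hu : 0 < u) :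
    √(2 * π * u) * √(2 * π * v) = 2 * π * √(u * v) := by
  rw [← sqrt_mul (by positivity), show 2 * π * u * (2 * π * v) = (2 * π) ^ 2 * (u * v) by ring,
    sqrt_mul (by positivity), sqrt_sq (by positivity)]

lemma integral_exp_tilt_mul_abs_gaussian (b : ℝ) {v : ℝ} (hv : 0 < v) :
    (∫ z : ℝ, exp (-(b * z) - b ^ 2 * v / 2) *
        (|z| / √(2 * π * v ^ 3)) * exp (-z ^ 2 / (2 * v))) =
      √(2 / (π * v)) * exp (-b ^ 2 * v / 2) + b * (2 * Phi (b * √v) - 1) := by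
  have h_square (z : ℝ) : exp (-(b * z) - b ^ 2 * v / 2) *
      (|z| / √(2 * π * v ^ 3)) * exp (-z ^ 2 / (2 * v)) =
      (√(2 * π * v ^ 3))⁻¹ * (|z| * exp (-(z + b * v) ^ 2 / (2 * v))) := by
    have h_complete : exp (-(b * z) - b ^ 2 * v / 2) * exp (-z ^ 2 / (2 * v)) =
        exp (-(z + b * v) ^ 2 / (2 * v)) := by
      rw [← exp_add]
      congr 1
      field_simp
      ring
    rw [← h_complete]
    ring
  simp_rw [h_square]
  rw [integral_const_mul, integral_abs_mul_exp_neg_sq_div hv, sqrt_two_pi_mul_cube hv,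
    mul_div_assoc, div_sqrt,
    show -(b * v) ^ 2 / (2 * v) = -b ^ 2 * v / 2 by field_simp,
    sqrt_two_div_pi_mul hv]
  field_simp

/-- the Gaussian integral identity, and the resulting explicit formula for
the conditional last-passage-time density `ψ_t(u)`. -/
theorem stmt_0 (b : ℝ) :
    (∀ v : ℝ, 0 < v →
      (∫ z : ℝ, Real.exp (-(b * z) - b ^ 2 * v / 2) *
          (|z| / Real.sqrt (2 * Real.pi * v ^ 3)) * Real.exp (-z ^ 2 / (2 * v))) =
        Real.sqrt (2 / (Real.pi * v)) * Real.exp (-b ^ 2 * v / 2) +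
          b * (2 * Phi (b * Real.sqrt v) - 1)) ∧
    (∀ u t : ℝ, 0 < u → u < t →
      Real.exp (-b ^ 2 * u / 2) / Real.sqrt (2 * Real.pi * u) *
        (∫ z : ℝ, Real.exp (-(b * z) - b ^ 2 * (t - u) / 2) *
          (|z| / Real.sqrt (2 * Real.pi * (t - u) ^ 3)) *
            Real.exp (-z ^ 2 / (2 * (t - u)))) =
      Real.exp (-b ^ 2 * u / 2) / (Real.pi * Real.sqrt (u * (t - u))) *
        (Real.exp (-b ^ 2 * (t - u) / 2) +
          b / 2 * Real.sqrt (2 * Real.pi * (t - u)) *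
            (2 * Phi (b * Real.sqrt (t - u)) - 1))) := by
  refine ⟨fun v hv ↦ integral_exp_tilt_mul_abs_gaussian b hv, fun u t hu hut ↦ ?_⟩
  have hv : 0 < t - u := sub_pos.mpr hut
  have h_sqrt : π * √(u * (t - u)) = √(2 * π * u) * √(2 * π * (t - u)) / 2 := by
    rw [sqrt_two_pi_mul_mul_sqrt_two_pi_mul hu]
    ring
  rw [integral_exp_tilt_mul_abs_gaussian b hv, sqrt_two_div_pi_mul hv, h_sqrt]
  field_simp
end

section
/- Let b ≤ 0 and s > 0. The function t ↦ ∫_0^s ψ_{s+t}(y) dy is differentiable on (0, ∞) with derivative d/dt ∫_0^s ψ_{s+t}(y) dy = −e^{−b²(s+t)/2} · √s / (π(s+t)√t) for every t > 0. -/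
/-!
Write `ψ_T(u) = e^{-b²u/2} / (π √u) · K_b(T - u)` with
`K_b(w) = e^{-b²w/2} / √w + (b/2) √(2π) (2Φ(b√w) - 1)`. Differentiating `Φ(b√w)`
produces exactly the term that cancels the `b²` part of the derivative of `e^{-b²w/2}/√w`, so
`K_b'(w) = -e^{-b²w/2} / (2 w^{3/2})` and `∂_T ψ_T(u) = -e^{-b²T/2} / (2π √u (T-u)^{3/2})`.
This is `-e^{-b²T/2}/(πT)` times the `u`-derivative of `√u / √(T-u)`. For `T = s + t` with `t`
near a fixed positive value it is dominated by `C / √u`, so we may differentiate under the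
integral sign, and the fundamental theorem of calculus evaluates the result.
-/

open MeasureTheory

/-- The conditional density `ψ_T(u)` of the last-passage time prior to `T` of Brownian
motion through the line `a + b t`, given that the first passage occurs before `T`. -/
noncomputable def psi (b T u : ℝ) : ℝ :=
  Real.exp (-b ^ 2 * u / 2) / (Real.pi * Real.sqrt (u * (T - u))) *
    (Real.exp (-b ^ 2 * (T - u) / 2) +
      b / 2 * Real.sqrt (2 * Real.pi * (T - u)) * (2 * Phi (b * Real.sqrt (T - u)) - 1))

open Real Set Filter Topology

lemma integrable_exp_neg_sq_div_two_div_sqrt :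
    Integrable (fun z : ℝ => exp (-z ^ 2 / 2) / √(2 * π)) := by
  convert (integrable_exp_neg_mul_sq (b := 1 / 2) (by norm_num)).div_const (√(2 * π)) using 3
  ring_nf

lemma hasDerivAt_Phi_s2 (y : ℝ) : HasDerivAt Phi (exp (-y ^ 2 / 2) / √(2 * π)) y := by
  have hint := integrable_exp_neg_sq_div_two_div_sqrt
  have hPhi : Phi = fun y => Phi 0 + ∫ z in (0 : ℝ)..y, exp (-z ^ 2 / 2) / √(2 * π) := by
    funext y
    rw [← intervalIntegral.integral_Iic_sub_Iic hint.integrableOn hint.integrableOn]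
    simp only [Phi]
    exact (add_sub_cancel _ _).symm
  rw [hPhi]
  exact (intervalIntegral.integral_hasDerivAt_right hint.intervalIntegrable
    (by fun_prop : Continuous _).aestronglyMeasurable.stronglyMeasurableAtFilter
    (by fun_prop : Continuous _).continuousAt).const_add _

noncomputable def psiKernel (b w : ℝ) : ℝ :=
  exp (-b ^ 2 * w / 2) / √w + b / 2 * √(2 * π) * (2 * Phi (b * √w) - 1)

lemma psi_eq_mul_psiKernel {b T u : ℝ} (hu : 0 < u) (huT : u < T) :
    psi b T u = exp (-b ^ 2 * u / 2) / (π * √u) * psiKernel b (T - u) := by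
  have hw : 0 < √(T - u) := sqrt_pos.2 (sub_pos.2 huT)
  have hu' : 0 < √u := sqrt_pos.2 hu
  rw [psi, psiKernel, sqrt_mul hu.le, sqrt_mul (by positivity)]
  field_simp

lemma hasDerivAt_psiKernel (b : ℝ) {w : ℝ} (hw : 0 < w) :
    HasDerivAt (psiKernel b) (-(exp (-b ^ 2 * w / 2) / (2 * (w * √w)))) w := by
  have hsqrt : HasDerivAt (√·) (1 / (2 * √w)) w := hasDerivAt_sqrt hw.ne'
  have hexp := (((hasDerivAt_id' w).const_mul (-b ^ 2)).div_const 2).exp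
  have hPhi := (hasDerivAt_Phi_s2 (b * √w)).comp w (hsqrt.const_mul b)
  have h := (hexp.div hsqrt (sqrt_pos.2 hw).ne').add
    (((hPhi.const_mul 2).sub_const 1).const_mul (b / 2 * √(2 * π)))
  refine (show HasDerivAt (psiKernel b) _ w from h).congr_deriv ?_
  have hw' : 0 < √w := sqrt_pos.2 hw
  have hπ : 0 < √(2 * π) := by positivity
  have hgauss : exp (-(b * √w) ^ 2 / 2) = exp (-b ^ 2 * w / 2) := by
    rw [mul_pow, sq_sqrt hw.le]; ring_nf
  rw [hgauss]
  field_simp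
  rw [sq_sqrt hw.le]
  ring

lemma continuousOn_psiKernel (b : ℝ) : ContinuousOn (psiKernel b) (Ioi 0) :=
  fun _ hw => (hasDerivAt_psiKernel b hw).continuousAt.continuousWithinAt

lemma intervalIntegrable_one_div_sqrt {s : ℝ} (hs : 0 ≤ s) :
    IntervalIntegrable (fun y => 1 / √y) volume 0 s := by
  refine intervalIntegral.intervalIntegrable_deriv_of_nonneg (g := fun y => 2 * √y)
    (by fun_prop) (fun y hy => ?_) (fun y _ => by positivity)
  rw [min_eq_left hs, max_eq_right hs] at hy
  refine ((hasDerivAt_sqrt hy.1.ne').const_mul 2).congr_deriv ?_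
  field_simp

lemma intervalIntegrable_psi (b : ℝ) {s T : ℝ} (hs : 0 ≤ s) (hsT : s < T) :
    IntervalIntegrable (psi b T) volume 0 s := by
  have hcont : ContinuousOn (fun y => exp (-b ^ 2 * y / 2) / π * psiKernel b (T - y))
      (uIcc 0 s) := by
    rw [uIcc_of_le hs]
    refine ContinuousOn.mul (by fun_prop) ((continuousOn_psiKernel b).comp (by fun_prop) ?_)
    exact fun y hy => sub_pos.2 (hy.2.trans_lt hsT)
  refine intervalIntegrable_iff.2 <|
    (intervalIntegrable_iff.1
      ((intervalIntegrable_one_div_sqrt hs).continuousOn_mul hcont)).congr_fun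
        (fun y hy => ?_) measurableSet_uIoc
  rw [uIoc_of_le hs] at hy
  rw [psi_eq_mul_psiKernel hy.1 (hy.2.trans_lt hsT)]
  ring

lemma hasDerivAt_sqrt_div_sqrt_sub {T y : ℝ} (hy : 0 < y) (hyT : y < T) :
    HasDerivAt (fun x => √x / √(T - x)) (T / (2 * √y * ((T - y) * √(T - y)))) y := by
  have hw : 0 < T - y := sub_pos.2 hyT
  have h := (hasDerivAt_sqrt hy.ne').div ((hasDerivAt_id' y).const_sub T |>.sqrt hw.ne')
    (sqrt_pos.2 hw).ne'
  refine h.congr_deriv ?_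
  have hy' : 0 < √y := sqrt_pos.2 hy
  have hw' : 0 < √(T - y) := sqrt_pos.2 hw
  field_simp
  rw [sq_sqrt hy.le, sq_sqrt hw.le]
  ring

lemma continuousOn_sqrt_div_sqrt_sub {s T : ℝ} (hsT : s < T) :
    ContinuousOn (fun x => √x / √(T - x)) (Icc 0 s) :=
  ContinuousOn.div (by fun_prop) (by fun_prop)
    fun x hx => (sqrt_pos.2 (sub_pos.2 (hx.2.trans_lt hsT))).ne'

lemma intervalIntegrable_deriv_sqrt_div_sqrt_sub {s T : ℝ} (hs : 0 ≤ s) (hsT : s < T) :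
    IntervalIntegrable (fun y => T / (2 * √y * ((T - y) * √(T - y)))) volume 0 s := by
  refine intervalIntegral.intervalIntegrable_deriv_of_nonneg
    (by rw [uIcc_of_le hs]; exact continuousOn_sqrt_div_sqrt_sub hsT) (fun y hy => ?_)
    (fun y hy => ?_)
  all_goals rw [min_eq_left hs, max_eq_right hs] at hy
  · exact hasDerivAt_sqrt_div_sqrt_sub hy.1 (hy.2.trans hsT)
  · have hTy : 0 < T - y := sub_pos.2 (hy.2.trans hsT)
    have hT : 0 < T := hy.1.trans (hy.2.trans hsT)
    positivity

lemma integral_deriv_sqrt_div_sqrt_sub {s T : ℝ} (hs : 0 ≤ s) (hsT : s < T) :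
    ∫ y in (0 : ℝ)..s, T / (2 * √y * ((T - y) * √(T - y))) = √s / √(T - s) := by
  rw [intervalIntegral.integral_eq_sub_of_hasDerivAt_of_le hs (continuousOn_sqrt_div_sqrt_sub hsT)
    (fun y hy => hasDerivAt_sqrt_div_sqrt_sub hy.1 (hy.2.trans hsT))
    (intervalIntegrable_deriv_sqrt_div_sqrt_sub hs hsT)]
  simp

noncomputable def psiHorizonDeriv (b T u : ℝ) : ℝ :=
  -(exp (-b ^ 2 * T / 2) / (π * T)) * (T / (2 * √u * ((T - u) * √(T - u))))

lemma hasDerivAt_psi_horizon {b T u : ℝ} (hu : 0 < u) (huT : u < T) :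
    HasDerivAt (fun T => psi b T u) (psiHorizonDeriv b T u) T := by
  have hK := ((hasDerivAt_psiKernel b (sub_pos.2 huT)).comp T
    ((hasDerivAt_id T).sub_const u)).const_mul (exp (-b ^ 2 * u / 2) / (π * √u))
  have heq : (fun T => psi b T u) =ᶠ[𝓝 T]
      fun T => exp (-b ^ 2 * u / 2) / (π * √u) * psiKernel b (T - u) := by
    filter_upwards [Ioi_mem_nhds huT] with T hT using psi_eq_mul_psiKernel hu hT
  refine (hK.congr_of_eventuallyEq heq).congr_deriv ?_
  have hu' : 0 < √u := sqrt_pos.2 hu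
  have hw : 0 < √(T - u) := sqrt_pos.2 (sub_pos.2 huT)
  have hT : 0 < T := hu.trans huT
  have hexp : exp (-b ^ 2 * T / 2) = exp (-b ^ 2 * u / 2) * exp (-b ^ 2 * (T - u) / 2) := by
    rw [← exp_add]; ring_nf
  rw [psiHorizonDeriv, hexp]
  field_simp

lemma norm_psiHorizonDeriv_le (b : ℝ) {T y r : ℝ} (hy : 0 < y) (hr : 0 < r)
    (hrT : r ≤ T - y) :
    ‖psiHorizonDeriv b T y‖ ≤ 1 / (2 * π * (r * √r)) * (1 / √y) := by
  have hT : 0 < T := by linarith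
  have hw : 0 < T - y := hr.trans_le hrT
  have hy' : 0 < √y := sqrt_pos.2 hy
  have hw' : 0 < √(T - y) := sqrt_pos.2 hw
  have hnorm : ‖psiHorizonDeriv b T y‖ =
      exp (-b ^ 2 * T / 2) * (1 / (2 * π * ((T - y) * √(T - y))) * (1 / √y)) := by
    rw [psiHorizonDeriv, norm_mul, norm_neg, norm_of_nonneg (by positivity),
      norm_of_nonneg (by positivity)]
    field_simp
  rw [hnorm]
  calc exp (-b ^ 2 * T / 2) * (1 / (2 * π * ((T - y) * √(T - y))) * (1 / √y))
      ≤ 1 * (1 / (2 * π * (r * √r)) * (1 / √y)) := by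
        gcongr
        exact exp_le_one_iff.2 (by nlinarith [sq_nonneg b])
    _ = 1 / (2 * π * (r * √r)) * (1 / √y) := one_mul _

lemma intervalIntegrable_psiHorizonDeriv (b : ℝ) {s T : ℝ} (hs : 0 ≤ s) (hsT : s < T) :
    IntervalIntegrable (psiHorizonDeriv b T) volume 0 s :=
  (intervalIntegrable_deriv_sqrt_div_sqrt_sub hs hsT).const_mul _

lemma integral_psiHorizonDeriv (b : ℝ) {s T : ℝ} (hs : 0 ≤ s) (hsT : s < T) :
    ∫ y in (0 : ℝ)..s, psiHorizonDeriv b T y =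
      -(exp (-b ^ 2 * T / 2) / (π * T)) * (√s / √(T - s)) := by
  simp only [psiHorizonDeriv]
  rw [intervalIntegral.integral_const_mul, integral_deriv_sqrt_div_sqrt_sub hs hsT]

theorem stmt_2_general (b s : ℝ) (hs : 0 < s) :
    ∀ t : ℝ, 0 < t →
      HasDerivAt (fun r : ℝ => ∫ y in (0:ℝ)..s, psi b (s + r) y)
        (-(Real.exp (-b ^ 2 * (s + t) / 2) * Real.sqrt s /
            (Real.pi * (s + t) * Real.sqrt t))) t := by
  intro t ht
  have hy : ∀ y ∈ uIoc 0 s, 0 < y ∧ y ≤ s := fun y hy => by rwa [uIoc_of_le hs.le] at hy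
  have hgap : ∀ y ∈ uIoc 0 s, ∀ x ∈ Ioi (t / 2), t / 2 ≤ s + x - y := fun y hy' x hx => by
    linarith [(hy y hy').2, mem_Ioi.1 hx]
  obtain ⟨-, hderiv⟩ := intervalIntegral.hasDerivAt_integral_of_dominated_loc_of_deriv_le
    (F := fun x y => psi b (s + x) y) (F' := fun x y => psiHorizonDeriv b (s + x) y)
    (Ioi_mem_nhds (half_lt_self ht))
    ((eventually_gt_nhds ht).mono fun x hx => (intervalIntegrable_iff.1
      (intervalIntegrable_psi b hs.le (by linarith))).aestronglyMeasurable)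
    (intervalIntegrable_psi b hs.le (by linarith))
    (intervalIntegrable_iff.1
      (intervalIntegrable_psiHorizonDeriv b hs.le (by linarith))).aestronglyMeasurable
    (ae_of_all _ fun y hy' x hx =>
      norm_psiHorizonDeriv_le b (hy y hy').1 (half_pos ht) (hgap y hy' x hx))
    ((intervalIntegrable_one_div_sqrt hs.le).const_mul _)
    (ae_of_all _ fun y hy' x hx => (hasDerivAt_psi_horizon (hy y hy').1
      (by linarith [hgap y hy' x hx, half_pos ht])).comp_const_add s x)
  refine hderiv.congr_deriv ?_
  rw [integral_psiHorizonDeriv b hs.le (by linarith), add_sub_cancel_left]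
  field_simp

/-- for `b ≤ 0` and `s > 0`, the function `t ↦ ∫_0^s ψ_{s+t}(y) dy` is
differentiable on `(0, ∞)` with derivative `-e^{-b²(s+t)/2} √s / (π (s+t) √t)`. -/
theorem stmt_2 (b s : ℝ) (hb : b ≤ 0) (hs : 0 < s) :
    ∀ t : ℝ, 0 < t →
      HasDerivAt (fun r : ℝ => ∫ y in (0:ℝ)..s, psi b (s + r) y)
        (-(Real.exp (-b ^ 2 * (s + t) / 2) * Real.sqrt s /
            (Real.pi * (s + t) * Real.sqrt t))) t :=
  stmt_2_general b s hs
end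

section
/- For every s > 0 and every b ∈ ℝ, ∫_0^∞ e^{−b²(s+t)/2} · √s / (π(s+t)√t) dt = 2Φ(−|b|√s). Equivalently, the total mass of the conditional density f_{T₂|τ₁}(t|s) = e^{−b²(s+t)/2}√s/(π(s+t)√t) equals 1 − 2·sgn(b)·(Φ(b√s) − 1/2), so this density is defective whenever b ≠ 0. -/
/-!
Substituting `t = s v²` turns the integral into `(2/π) ∫₀^∞ e^{-a²(1+v²)/2} / (1 + v²) dv` with
`a = |b|√s`. Writing `e^{-a²(1+v²)/2} / (1 + v²) = ∫_a^∞ u e^{-u²(1+v²)/2} du` and exchanging the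
order of integration, the inner `v`-integral is a half-line Gaussian integral, `√(π/2) e^{-u²/2}`,
so the double integral is `π Φ(-a)`. The second form is the symmetry `Φ(-x) = 1 - Φ(x)`.
-/

open MeasureTheory

open Real Set Filter Topology ProbabilityTheory

lemma Phi_eq_setIntegral_gaussianPDFReal (y : ℝ) :
    Phi y = ∫ z in Iic y, gaussianPDFReal 0 1 z := by
  simp only [Phi, gaussianPDFReal_def, NNReal.coe_one, mul_one, sub_zero]
  congr 1 with z
  ring

lemma Phi_add_Phi_neg (y : ℝ) : Phi y + Phi (-y) = 1 := by
  have hsymm : Phi (-y) = ∫ z in Ioi y, gaussianPDFReal 0 1 z := by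
    rw [Phi_eq_setIntegral_gaussianPDFReal, ← integral_comp_neg_Ioi]
    simp [gaussianPDFReal_def]
  rw [hsymm, Phi_eq_setIntegral_gaussianPDFReal,
    intervalIntegral.integral_Iic_add_Ioi (integrable_gaussianPDFReal 0 1).integrableOn
      (integrable_gaussianPDFReal 0 1).integrableOn,
    integral_gaussianPDFReal_eq_one 0 one_ne_zero]

lemma two_mul_Phi_neg_abs_mul (b c : ℝ) :
    2 * Phi (-(|b| * c)) = 1 - 2 * Real.sign b * (Phi (b * c) - 1 / 2) := by
  have h := Phi_add_Phi_neg (b * c)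
  rcases lt_trichotomy b 0 with hb | rfl | hb
  · rw [Real.sign_of_neg hb, abs_of_neg hb, neg_mul, neg_neg]
    ring
  · simp only [zero_mul, neg_zero, abs_zero, Real.sign_zero] at h ⊢
    linarith
  · rw [Real.sign_of_pos hb, abs_of_pos hb]
    linarith

lemma integral_Ioi_exp_neg_sq_div_two (a : ℝ) :
    ∫ u in Ioi a, exp (-u ^ 2 / 2) = √(2 * π) * Phi (-a) := by
  rw [Phi, ← integral_const_mul, ← integral_comp_neg_Ioi]
  refine setIntegral_congr_fun measurableSet_Ioi fun u _ => ?_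
  rw [neg_sq, mul_div_cancel₀ _ (by positivity)]

lemma integral_Ioi_mul_exp_neg_mul_sq {c : ℝ} (hc : 0 < c) (a : ℝ) :
    ∫ u in Ioi a, u * exp (-c * u ^ 2) = exp (-c * a ^ 2) / (2 * c) := by
  have hderiv (u : ℝ) : HasDerivAt (fun u => -exp (-c * u ^ 2) / (2 * c))
      (u * exp (-c * u ^ 2)) u := by
    refine (((hasDerivAt_pow 2 u).const_mul (-c)).exp.fun_neg.div_const (2 * c)).congr_deriv ?_
    field_simp
    ring
  have hlim : Tendsto (fun u => -exp (-c * u ^ 2) / (2 * c)) atTop (𝓝 0) := by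
    have : Tendsto (fun u : ℝ => -c * u ^ 2) atTop atBot :=
      (tendsto_pow_atTop two_ne_zero).const_mul_atTop_of_neg (neg_lt_zero.mpr hc)
    simpa using ((tendsto_exp_atBot.comp this).neg.div_const (2 * c))
  rw [integral_Ioi_of_hasDerivAt_of_tendsto' (fun u _ => hderiv u)
    (integrable_mul_exp_neg_mul_sq hc).integrableOn hlim]
  ring

lemma integral_Ioi_comp_mul_sq (g : ℝ → ℝ) {s : ℝ} (hs : 0 < s) :
    ∫ v in Ioi 0, 2 * s * v * g (s * v ^ 2) = ∫ t in Ioi 0, g t := by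
  have hscale := integral_comp_mul_left_Ioi' g 0 hs
  rw [mul_zero] at hscale
  rw [← hscale, smul_eq_mul,
    ← integral_comp_rpow_Ioi_of_pos (g := fun x => g (s * x)) two_pos, ← integral_const_mul]
  refine setIntegral_congr_fun measurableSet_Ioi fun v _ => ?_
  rw [smul_eq_mul, show (2 : ℝ) - 1 = 1 by norm_num, rpow_one, rpow_two]
  ring

noncomputable def gaussKernel (u v : ℝ) : ℝ := u * exp (-u ^ 2 * (1 + v ^ 2) / 2)

lemma gaussKernel_eq (u v : ℝ) :
    gaussKernel u v = u * exp (-u ^ 2 / 2) * exp (-(u ^ 2 / 2) * v ^ 2) := by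
  rw [gaussKernel, mul_assoc, ← exp_add]
  ring_nf

lemma gaussKernel_nonneg {u : ℝ} (hu : 0 ≤ u) (v : ℝ) : 0 ≤ gaussKernel u v := by
  unfold gaussKernel; positivity

lemma integrable_gaussKernel_snd {u : ℝ} (hu : 0 < u) : Integrable (gaussKernel u) := by
  rw [funext (gaussKernel_eq u)]
  exact (integrable_exp_neg_mul_sq (by positivity)).const_mul _

lemma integral_gaussKernel_snd {u : ℝ} (hu : 0 < u) :
    ∫ v in Ioi 0, gaussKernel u v = √(2 * π) / 2 * exp (-u ^ 2 / 2) := by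
  simp_rw [gaussKernel_eq]
  rw [integral_const_mul, integral_gaussian_Ioi, div_div_eq_mul_div, mul_comm π,
    sqrt_div (by positivity), sqrt_sq hu.le]
  field_simp

lemma integral_gaussKernel_fst (a v : ℝ) :
    ∫ u in Ioi a, gaussKernel u v = exp (-a ^ 2 * (1 + v ^ 2) / 2) / (1 + v ^ 2) := by
  have hexp (u : ℝ) : -u ^ 2 * (1 + v ^ 2) / 2 = -((1 + v ^ 2) / 2) * u ^ 2 := by ring
  simp_rw [gaussKernel, hexp, integral_Ioi_mul_exp_neg_mul_sq (by positivity : 0 < (1 + v ^ 2) / 2)]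
  field_simp

lemma integrable_gaussKernel {a : ℝ} (ha : 0 ≤ a) :
    Integrable (Function.uncurry gaussKernel)
      ((volume.restrict (Ioi a)).prod (volume.restrict (Ioi 0))) := by
  have hcont : Continuous (Function.uncurry gaussKernel) := by
    unfold Function.uncurry gaussKernel; fun_prop
  refine (integrable_prod_iff hcont.aestronglyMeasurable).2 ⟨?_, ?_⟩
  · filter_upwards [ae_restrict_mem measurableSet_Ioi] with u hu
    exact (integrable_gaussKernel_snd (ha.trans_lt hu)).integrableOn
  · refine (((integrable_exp_neg_mul_sq (b := 1 / 2) (by norm_num)).const_mul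
      (√(2 * π) / 2)).integrableOn).congr ?_
    filter_upwards [ae_restrict_mem measurableSet_Ioi] with u hu
    have hu : 0 < u := ha.trans_lt hu
    simp only [Function.uncurry_apply_pair, Real.norm_of_nonneg (gaussKernel_nonneg hu.le _)]
    rw [integral_gaussKernel_snd hu]
    ring_nf

lemma integral_exp_neg_mul_one_add_sq_div {a : ℝ} (ha : 0 ≤ a) :
    ∫ v in Ioi 0, exp (-a ^ 2 * (1 + v ^ 2) / 2) / (1 + v ^ 2) = π * Phi (-a) := by
  calc ∫ v in Ioi 0, exp (-a ^ 2 * (1 + v ^ 2) / 2) / (1 + v ^ 2)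
      = ∫ v in Ioi 0, ∫ u in Ioi a, gaussKernel u v := by simp_rw [integral_gaussKernel_fst]
    _ = ∫ u in Ioi a, ∫ v in Ioi 0, gaussKernel u v :=
        (integral_integral_swap (integrable_gaussKernel ha)).symm
    _ = ∫ u in Ioi a, √(2 * π) / 2 * exp (-u ^ 2 / 2) :=
        setIntegral_congr_fun measurableSet_Ioi fun u hu =>
          integral_gaussKernel_snd (ha.trans_lt hu)
    _ = π * Phi (-a) := by
        rw [integral_const_mul, integral_Ioi_exp_neg_sq_div_two, ← mul_assoc, div_mul_eq_mul_div,
          mul_self_sqrt (by positivity)]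
        ring

lemma integral_Ioi_exp_mul_sqrt_div (s b : ℝ) (hs : 0 < s) :
    ∫ t in Ioi 0, exp (-b ^ 2 * (s + t) / 2) * √s / (π * (s + t) * √t) =
      2 * Phi (-(|b| * √s)) := by
  have hb : (|b| * √s) ^ 2 = b ^ 2 * s := by rw [mul_pow, sq_abs, sq_sqrt hs.le]
  rw [← integral_Ioi_comp_mul_sq _ hs]
  calc ∫ v in Ioi 0, 2 * s * v *
        (exp (-b ^ 2 * (s + s * v ^ 2) / 2) * √s / (π * (s + s * v ^ 2) * √(s * v ^ 2)))
      = ∫ v in Ioi 0, 2 / π * (exp (-(|b| * √s) ^ 2 * (1 + v ^ 2) / 2) / (1 + v ^ 2)) := by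
        refine setIntegral_congr_fun measurableSet_Ioi fun v (hv : 0 < v) => ?_
        rw [sqrt_mul hs.le, sqrt_sq hv.le, hb]
        field_simp
    _ = 2 * Phi (-(|b| * √s)) := by
        rw [integral_const_mul, integral_exp_neg_mul_one_add_sq_div (by positivity)]
        field_simp

/-- the total mass of the conditional density
`f_{T₂|τ₁}(t|s) = e^{-b²(s+t)/2} √s/(π(s+t)√t)` equals `2Φ(-|b|√s)`, i.e.
`1 - 2 sgn(b) (Φ(b√s) - 1/2)`; in particular it is defective whenever `b ≠ 0`. -/
theorem stmt_5 (s b : ℝ) (hs : 0 < s) :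
    (∫ t in Set.Ioi (0:ℝ),
        Real.exp (-b ^ 2 * (s + t) / 2) * Real.sqrt s /
          (Real.pi * (s + t) * Real.sqrt t)) =
      2 * Phi (-(|b| * Real.sqrt s)) ∧
    (∫ t in Set.Ioi (0:ℝ),
        Real.exp (-b ^ 2 * (s + t) / 2) * Real.sqrt s /
          (Real.pi * (s + t) * Real.sqrt t)) =
      1 - 2 * Real.sign b * (Phi (b * Real.sqrt s) - 1 / 2) := by
  have h := integral_Ioi_exp_mul_sqrt_div s b hs
  exact ⟨h, h.trans (two_mul_Phi_neg_abs_mul b √s)⟩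
end

section
/- Let x < a. Then ∫_0^∞ (1/(πt)) · [ ∫_0^t ((a−x)/(√(2π)·s·√(t−s))) · e^{−(a−x)²/(2s)} ds ] dt = 1; that is, for b = 0 the density f_{τ₂}(t) = (1/(πt)) ∫_0^t (a−x)·e^{−(a−x)²/(2s)}/(√(2π)·s·√(t−s)) ds of the second-passage time of Brownian motion through the constant level a is non-defective. -/
/-!
The density `f_{τ₂}` is the convolution `∫₀ᵗ f_{τ₁}(s) f_{T₂|τ₁}(t - s | s) ds` of two probability
densities. Since everything is nonnegative, Tonelli lets us integrate in `t` first: the inner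
integral is `1` (substitute `t = s (1 + w²)`, an arctangent integral), and what remains is the
total mass of Lévy's first-passage density, again `1` (substitute `s = x⁻²`, a Gaussian integral).
-/

open MeasureTheory Set Real Filter Function

theorem integral_integral_swap_of_nonneg {α β : Type*} [MeasurableSpace α] [MeasurableSpace β]
    {μ : Measure α} {ν : Measure β} [SFinite μ] [SFinite ν] {f : α → β → ℝ}
    (hf : AEStronglyMeasurable (uncurry f) (μ.prod ν)) (hf_nonneg : ∀ x y, 0 ≤ f x y)
    (hf_int : ∀ᵐ y ∂ν, Integrable (f · y) μ) (hg : Integrable (fun y => ∫ x, f x y ∂μ) ν) :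
    ∫ x, ∫ y, f x y ∂ν ∂μ = ∫ y, ∫ x, f x y ∂μ ∂ν :=
  integral_integral_swap <| (integrable_prod_iff' hf).2
    ⟨hf_int, by simpa only [uncurry_apply_pair, Real.norm_of_nonneg (hf_nonneg _ _)] using hg⟩

/-- Lévy's density `f_{τ₁}` of the first passage time through a level at distance `c`. -/
noncomputable def firstPassageDensity (c s : ℝ) : ℝ :=
  c / (√(2 * π) * s * √s) * exp (-c ^ 2 / (2 * s))

/-- The paper's `f_{T₂|τ₁}(u|s)`: the density of `T₂ = τ₂ - τ₁` given `τ₁ = s`. -/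
noncomputable def conditionalPassageDensity (s u : ℝ) : ℝ :=
  √s / (π * (s + u) * √u)

noncomputable def secondPassageDensity (c t : ℝ) : ℝ :=
  ∫ s in Ioo 0 t, firstPassageDensity c s * conditionalPassageDensity s (t - s)

theorem firstPassageDensity_nonneg {c : ℝ} (hc : 0 ≤ c) (s : ℝ) : 0 ≤ firstPassageDensity c s := by
  rcases le_or_gt s 0 with hs | hs
  · simp [firstPassageDensity, sqrt_eq_zero'.2 hs]
  · unfold firstPassageDensity
    positivity

theorem conditionalPassageDensity_nonneg (s u : ℝ) : 0 ≤ conditionalPassageDensity s u := by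
  rcases le_or_gt u 0 with hu | hu
  · simp [conditionalPassageDensity, sqrt_eq_zero'.2 hu]
  rcases le_or_gt s 0 with hs | hs
  · simp [conditionalPassageDensity, sqrt_eq_zero'.2 hs]
  · unfold conditionalPassageDensity
    positivity

theorem integral_firstPassageDensity {c : ℝ} (hc : 0 < c) :
    ∫ s in Ioi 0, firstPassageDensity c s = 1 := by
  rw [← integral_comp_rpow_Ioi _ (by norm_num : (-2 : ℝ) ≠ 0)]
  calc ∫ x in Ioi 0, (|(-2 : ℝ)| * x ^ ((-2 : ℝ) - 1)) • firstPassageDensity c (x ^ (-2 : ℝ))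
      = ∫ x in Ioi 0, 2 * c / √(2 * π) * exp (-(c ^ 2 / 2) * x ^ 2) := by
        refine setIntegral_congr_fun measurableSet_Ioi fun x (hx : 0 < x) => ?_
        have hsqrt : √(x ^ (-2 : ℝ)) = x⁻¹ := by
          rw [rpow_neg hx.le, rpow_two, ← inv_pow, sqrt_sq (by positivity)]
        rw [firstPassageDensity, hsqrt, show (-2 : ℝ) - 1 = -(3 : ℕ) by norm_num,
          rpow_neg hx.le, rpow_neg hx.le, rpow_two, rpow_natCast, smul_eq_mul, abs_neg, abs_two]
        field_simp
    _ = 1 := by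
        rw [integral_const_mul, integral_gaussian_Ioi,
          show π / (c ^ 2 / 2) = 2 * π / c ^ 2 by field_simp, sqrt_div' _ (sq_nonneg c),
          sqrt_sq hc.le]
        field_simp

theorem integral_conditionalPassageDensity_sub {s : ℝ} (hs : 0 < s) :
    ∫ t in Ioi s, conditionalPassageDensity s (t - s) = 1 := by
  set f : ℝ → ℝ := fun w => s * (1 + w ^ 2)
  have hmono : StrictMonoOn f (Ici 0) := fun p hp q _ hpq => by dsimp only [f]; gcongr
  have himage : f '' Ioi 0 = Ioi s := by
    simpa [f] using (show Continuous f by fun_prop).continuousOn.image_Ioi_of_strictMonoOn hmono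
      ((tendsto_atTop_add_const_left _ 1 (tendsto_pow_atTop two_ne_zero)).const_mul_atTop hs)
  have hderiv : ∀ w ∈ Ioi (0 : ℝ), HasDerivWithinAt f (2 * s * w) (Ioi 0) w := fun w _ => by
    simpa [f, mul_comm, mul_left_comm] using
      (((hasDerivAt_pow 2 w).const_add 1).const_mul s).hasDerivWithinAt
  rw [← himage, integral_image_eq_integral_abs_deriv_smul measurableSet_Ioi hderiv
    (hmono.injOn.mono Ioi_subset_Ici_self)]
  calc ∫ w in Ioi 0, |2 * s * w| • conditionalPassageDensity s (f w - s)
      = ∫ w in Ioi 0, 2 / π * (1 + w ^ 2)⁻¹ := by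
        refine setIntegral_congr_fun measurableSet_Ioi fun w (hw : 0 < w) => ?_
        rw [smul_eq_mul, abs_of_pos (by positivity), conditionalPassageDensity,
          show s + (f w - s) = s * (1 + w ^ 2) by ring, show f w - s = s * w ^ 2 by ring,
          sqrt_mul hs.le, sqrt_sq hw.le]
        field_simp
    _ = 1 := by
        rw [integral_const_mul, integral_Ioi_inv_one_add_sq, arctan_zero, sub_zero]
        field_simp

/-- The joint density of `(τ₂, τ₁)` at `(t, s)`. -/
noncomputable def jointPassageDensity (c t s : ℝ) : ℝ :=
  if s < t then firstPassageDensity c s * conditionalPassageDensity s (t - s) else 0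

theorem measurable_jointPassageDensity (c : ℝ) : Measurable (uncurry (jointPassageDensity c)) :=
  Measurable.ite (measurableSet_lt measurable_snd measurable_fst)
    (by unfold firstPassageDensity conditionalPassageDensity; fun_prop) measurable_const

theorem jointPassageDensity_nonneg {c : ℝ} (hc : 0 ≤ c) (t s : ℝ) :
    0 ≤ jointPassageDensity c t s := by
  unfold jointPassageDensity
  split_ifs
  exacts [mul_nonneg (firstPassageDensity_nonneg hc s) (conditionalPassageDensity_nonneg _ _),
    le_rfl]

theorem setIntegral_jointPassageDensity_right (c t : ℝ) :
    ∫ s in Ioi 0, jointPassageDensity c t s = secondPassageDensity c t := by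
  rw [secondPassageDensity, ← Ioi_inter_Iio, ← setIntegral_indicator measurableSet_Iio]
  simp only [jointPassageDensity, indicator_apply, mem_Iio]

theorem setIntegral_jointPassageDensity_left (c : ℝ) {s : ℝ} (hs : 0 < s) :
    ∫ t in Ioi 0, jointPassageDensity c t s = firstPassageDensity c s := by
  rw [← mul_one (firstPassageDensity c s), ← integral_conditionalPassageDensity_sub hs,
    ← integral_const_mul, ← inter_eq_right.2 (Ioi_subset_Ioi hs.le),
    ← setIntegral_indicator measurableSet_Ioi]
  simp only [jointPassageDensity, indicator_apply, mem_Ioi]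

theorem integral_secondPassageDensity {c : ℝ} (hc : 0 < c) :
    ∫ t in Ioi 0, secondPassageDensity c t = 1 := by
  have h_slice_int : ∀ᵐ s ∂volume.restrict (Ioi 0),
      Integrable (jointPassageDensity c · s) (volume.restrict (Ioi 0)) := by
    refine (ae_restrict_iff' measurableSet_Ioi).2 (ae_of_all _ fun s (hs : 0 < s) => ?_)
    refine Integrable.of_integral_ne_zero ?_
    rw [setIntegral_jointPassageDensity_left c hs, firstPassageDensity]
    positivity
  have h_first_int : IntegrableOn (firstPassageDensity c) (Ioi 0) :=
    Integrable.of_integral_ne_zero (by rw [integral_firstPassageDensity hc]; exact one_ne_zero)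
  calc ∫ t in Ioi 0, secondPassageDensity c t
      = ∫ t in Ioi 0, ∫ s in Ioi 0, jointPassageDensity c t s := by
        simp only [setIntegral_jointPassageDensity_right]
    _ = ∫ s in Ioi 0, ∫ t in Ioi 0, jointPassageDensity c t s :=
        integral_integral_swap_of_nonneg (measurable_jointPassageDensity c).aestronglyMeasurable
          (jointPassageDensity_nonneg hc.le) h_slice_int
          (h_first_int.congr_fun (fun s hs => (setIntegral_jointPassageDensity_left c hs).symm)
            measurableSet_Ioi)
    _ = ∫ s in Ioi 0, firstPassageDensity c s :=
        setIntegral_congr_fun measurableSet_Ioi fun s hs => setIntegral_jointPassageDensity_left c hs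
    _ = 1 := integral_firstPassageDensity hc

theorem secondPassageDensity_eq {c t : ℝ} (ht : 0 < t) :
    secondPassageDensity c t = 1 / (π * t) *
      ∫ s in (0 : ℝ)..t, c / (√(2 * π) * s * √(t - s)) * exp (-c ^ 2 / (2 * s)) := by
  rw [intervalIntegral.integral_of_le ht.le, integral_Ioc_eq_integral_Ioo, ← integral_const_mul,
    secondPassageDensity]
  refine setIntegral_congr_fun measurableSet_Ioo fun s ⟨hs, hst⟩ => ?_
  have : 0 < t - s := sub_pos.2 hst
  rw [firstPassageDensity, conditionalPassageDensity, add_sub_cancel]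
  field_simp

/-- for `b = 0` and `x < a`, the density of the second-passage time of
Brownian motion through the constant level `a`,
`f_{τ₂}(t) = (1/(πt)) ∫_0^t (a-x) e^{-(a-x)²/(2s)}/(√(2π) s √(t-s)) ds`,
is non-defective. -/
theorem stmt_14 (a x : ℝ) (hx : x < a) :
    (∫ t in Set.Ioi (0:ℝ), 1 / (Real.pi * t) *
        ∫ s in (0:ℝ)..t,
          (a - x) / (Real.sqrt (2 * Real.pi) * s * Real.sqrt (t - s)) *
            Real.exp (-(a - x) ^ 2 / (2 * s))) = 1 := by
  refine (setIntegral_congr_fun measurableSet_Ioi fun t ht => ?_).trans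
    (integral_secondPassageDensity (sub_pos.2 hx))
  exact (secondPassageDensity_eq ht).symm
end
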